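/- Let k = ℚ. The inverse limit lim_n k^×/(k^×)^n (over positive integers n ordered by divisibility, with transition maps induced by the identity on k^×, where the map from level mn to level n is induced by the m-th power map being absorbed into the quotient) has the cardinality of the continuum. -/

import Mathlib

/-!
Write `Sₙ(ε) = ∑_{j<n} ε_j (j+1)!` for a binary sequence `ε`. For `m ∣ n` the difference
`Sₙ(ε) - Sₘ(ε)` is a sum of factorials `(j+1)!` with `j ≥ m`, hence divisible by `m`, so the classes
of `2 ^ Sₙ(ε)` form a point of the inverse limit. If `i` is the first index where `ε` and `ε'`
differ, then `S_N(ε') - S_N(ε) ≡ ±(i+1)! (mod (i+2)!)` at level `N = (i+2)!`; as the 2-adic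
valuation of an `N`-th power is divisible by `N`, the two points differ. This embeds `2^ℵ₀` points,
while the inverse limit is a subset of a countable product of countable sets.
-/

open Cardinal Finset QuotientGroup

namespace ModPowers

def powQuotientLimit (G : Type*) [CommGroup G] :
    Set ((n : ℕ+) → G ⧸ (powMonoidHom (n : ℕ) : G →* G).range) :=
  {f | ∀ m n : ℕ+, (m : ℕ) ∣ (n : ℕ) →
    ∀ x : G, (mk x : G ⧸ (powMonoidHom (n : ℕ)).range) = f n →
      (mk x : G ⧸ (powMonoidHom (m : ℕ)).range) = f m}

section CommGroup

variable {G : Type*} [CommGroup G]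

theorem range_powMonoidHom_le_of_dvd {m n : ℕ} (h : m ∣ n) :
    (powMonoidHom n : G →* G).range ≤ (powMonoidHom m).range := by
  obtain ⟨k, rfl⟩ := h
  rintro _ ⟨y, rfl⟩
  exact ⟨y ^ k, by simp [pow_mul']⟩

theorem mk_zpow_eq_mk_zpow_of_dvd (g : G) {n : ℕ} {a b : ℤ} (h : (n : ℤ) ∣ b - a) :
    (mk (g ^ a) : G ⧸ (powMonoidHom n).range) = mk (g ^ b) := by
  obtain ⟨c, hc⟩ := h
  refine QuotientGroup.eq.mpr ⟨g ^ c, ?_⟩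
  simp only [powMonoidHom_apply, ← zpow_natCast, ← zpow_mul, ← zpow_neg, ← zpow_add]
  congr 1
  linarith

theorem mk_zpow_mem_powQuotientLimit (g : G) (a : ℕ → ℤ)
    (ha : ∀ m n : ℕ+, (m : ℕ) ∣ (n : ℕ) → ((m : ℕ) : ℤ) ∣ a n - a m) :
    (fun n : ℕ+ => (mk (g ^ a n) : G ⧸ (powMonoidHom (n : ℕ)).range)) ∈ powQuotientLimit G := by
  intro m n hmn x hx
  have hx_m : (mk x : G ⧸ (powMonoidHom (m : ℕ)).range) = mk (g ^ a n) :=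
    QuotientGroup.eq.mpr (range_powMonoidHom_le_of_dvd hmn (QuotientGroup.eq.mp hx))
  rw [hx_m]
  exact (mk_zpow_eq_mk_zpow_of_dvd g (ha m n hmn)).symm

end CommGroup

theorem mk_powQuotientLimit_le_continuum {G : Type} [CommGroup G] [Countable G] :
    #(powQuotientLimit G) ≤ 𝔠 := by
  have hquot (n : ℕ+) : #(G ⧸ (powMonoidHom (n : ℕ) : G →* G).range) ≤ ℵ₀ :=
    mk_le_aleph0_iff.mpr mk_surjective.countable
  calc #(powQuotientLimit G) ≤ #((n : ℕ+) → G ⧸ (powMonoidHom (n : ℕ) : G →* G).range) :=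
        mk_subtype_le _
    _ ≤ prod fun _ : ℕ+ => ℵ₀ := by rw [mk_pi]; exact prod_le_prod _ _ hquot
    _ = 𝔠 := by rw [prod_const', mk_eq_aleph0 ℕ+, aleph0_power_aleph0]

def factorialDigitSum (ε : ℕ → Bool) (n : ℕ) : ℤ :=
  ∑ j ∈ range n, if ε j then ((j + 1).factorial : ℤ) else 0

theorem factorial_succ_dvd_factorialDigitSum_sub (ε : ℕ → Bool) {m n : ℕ} (h : m ≤ n) :
    ((m + 1).factorial : ℤ) ∣ factorialDigitSum ε n - factorialDigitSum ε m := by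
  rw [factorialDigitSum, factorialDigitSum, ← sum_range_add_sum_Ico _ h, add_sub_cancel_left]
  refine dvd_sum fun j hj => ?_
  split_ifs
  · exact_mod_cast Nat.factorial_dvd_factorial (by simp at hj; omega)
  · exact dvd_zero _

theorem dvd_factorialDigitSum_sub (ε : ℕ → Bool) {m n : ℕ} (hm : 0 < m) (h : m ≤ n) :
    (m : ℤ) ∣ factorialDigitSum ε n - factorialDigitSum ε m :=
  (Int.natCast_dvd_natCast.mpr (Nat.dvd_factorial hm m.le_succ)).trans
    (factorial_succ_dvd_factorialDigitSum_sub ε h)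

theorem exists_not_dvd_factorialDigitSum_sub {ε ε' : ℕ → Bool} (h : ε ≠ ε') :
    ∃ N : ℕ+, ¬ ((N : ℕ) : ℤ) ∣ factorialDigitSum ε' N - factorialDigitSum ε N := by
  classical
  have hex : ∃ i, ε i ≠ ε' i := Function.ne_iff.mp h
  obtain ⟨i, hi, hmin⟩ : ∃ i, ε i ≠ ε' i ∧ ∀ j < i, ε j = ε' j :=
    ⟨Nat.find hex, Nat.find_spec hex, fun j hj => not_not.mp (Nat.find_min hex hj)⟩
  set D := fun n => factorialDigitSum ε' n - factorialDigitSum ε n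
  have hdigit : (D (i + 1)).natAbs = (i + 1).factorial := by
    have hagree : factorialDigitSum ε i = factorialDigitSum ε' i :=
      sum_congr rfl fun j hj => by rw [hmin j (mem_range.mp hj)]
    simp only [D, factorialDigitSum, sum_range_succ] at hagree ⊢
    rw [hagree]
    cases hε : ε i <;> cases hε' : ε' i <;> simp_all
  set N := (i + 2).factorial
  have htail : (N : ℤ) ∣ D N - D (i + 1) := by
    have hle : i + 1 ≤ N := (Nat.le_succ _).trans (Nat.self_le_factorial _)
    simpa only [D, sub_sub_sub_comm] using
      dvd_sub (factorial_succ_dvd_factorialDigitSum_sub ε' hle)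
        (factorial_succ_dvd_factorialDigitSum_sub ε hle)
  refine ⟨⟨N, Nat.factorial_pos _⟩, fun hdvd => ?_⟩
  have hlow : N ∣ (i + 1).factorial := hdigit ▸ Int.natCast_dvd.mp ((dvd_sub_right hdvd).mp htail)
  have hlt : (i + 1).factorial < N := (Nat.factorial_lt (Nat.succ_pos i)).mpr (Nat.lt_succ_self _)
  exact hlt.not_ge (Nat.le_of_dvd (Nat.factorial_pos _) hlow)

theorem dvd_sub_of_mk_zpow_eq_mk_zpow {p : ℕ} [Fact p.Prime] {u : ℚˣ}
    (hu : padicValRat p u = 1) {N : ℕ} {a b : ℤ}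
    (h : (mk (u ^ a) : ℚˣ ⧸ (powMonoidHom N).range) = mk (u ^ b)) :
    (N : ℤ) ∣ b - a := by
  obtain ⟨y, hy⟩ := QuotientGroup.eq.mp h
  have hy' : (y : ℚ) ^ N = (u : ℚ) ^ (b - a) := by
    rw [← Units.val_pow_eq_pow_val, ← Units.val_zpow_eq_zpow_val, zpow_sub, mul_comm]
    exact congrArg Units.val hy
  have hval := congrArg (padicValRat p) hy'
  rw [padicValRat.pow, padicValRat.zpow, hu, mul_one] at hval
  exact ⟨padicValRat p y, hval.symm⟩

theorem continuum_le_mk_powQuotientLimit_rat : 𝔠 ≤ #(powQuotientLimit ℚˣ) := by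
  let two : ℚˣ := Units.mk0 2 two_ne_zero
  have htwo : padicValRat 2 two = 1 := by simpa [two] using padicValRat.self (p := 2) one_lt_two
  let embed (ε : ℕ → Bool) : powQuotientLimit ℚˣ :=
    ⟨_, mk_zpow_mem_powQuotientLimit two (factorialDigitSum ε) fun m n hmn =>
      dvd_factorialDigitSum_sub ε m.pos (Nat.le_of_dvd n.pos hmn)⟩
  have hembed : Function.Injective embed := by
    intro ε ε' hεε'
    by_contra hne
    obtain ⟨N, hN⟩ := exists_not_dvd_factorialDigitSum_sub hne
    exact hN (dvd_sub_of_mk_zpow_eq_mk_zpow htwo (congrFun (congrArg Subtype.val hεε') N))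
  simpa using mk_le_of_injective hembed

end ModPowers

open ModPowers in
/-- the inverse limit `lim_n ℚ^×/(ℚ^×)^n`, over positive integers ordered by
divisibility with the canonical projections as transition maps, has the cardinality of the
continuum. -/
theorem qunits_modpowers_invlimit_cardinality_continuum :
    Cardinal.mk
      {f : (n : ℕ+) → ℚˣ ⧸ (powMonoidHom (n : ℕ) : ℚˣ →* ℚˣ).range //
        ∀ m n : ℕ+, (m : ℕ) ∣ (n : ℕ) →
          ∀ x : ℚˣ, (QuotientGroup.mk x : ℚˣ ⧸ (powMonoidHom (n : ℕ)).range) = f n →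
            (QuotientGroup.mk x : ℚˣ ⧸ (powMonoidHom (m : ℕ)).range) = f m} =
    Cardinal.continuum := by
  have : Countable ℚˣ := Units.val_injective.countable
  exact le_antisymm mk_powQuotientLimit_le_continuum continuum_le_mk_powQuotientLimit_rat
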